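/- Let T be a tree with positive edge weights and no degree-2 vertices, and let c be a vertex of minimum leaf-status. Then for any vertex y ≠ c that is not adjacent to c, ℓ(y) > ℓ(x) where x is the neighbor of c on the c-y-path; in particular, c is a 'leaf-status center': leaf-status strictly increases along any path of length ≥ 2 away from c. -/

import Mathlib

open SimpleGraph Finset

noncomputable section

variable {V : Type*}

/-- The weight of a walk: sum of the weights of its edges. -/
def walkWeight {G : SimpleGraph V} (w : Sym2 V → ℝ) {x y : V} (p : G.Walk x y) : ℝ :=
  (p.edges.map w).sum

/-- The unique path between two vertices of a tree. -/
noncomputable def tpath {G : SimpleGraph V} (hT : G.IsTree) (x y : V) : G.Walk x y :=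
  (hT.existsUnique_path x y).choose

/-- The weighted distance between two vertices of a tree: the weight of the unique path. -/
noncomputable def tdist {G : SimpleGraph V} (hT : G.IsTree) (w : Sym2 V → ℝ) (x y : V) : ℝ :=
  walkWeight w (tpath hT x y)

/-- The distance from a vertex `x` to a path `p`: the minimum distance from `x`
to a vertex on `p`. -/
noncomputable def distToPath {G : SimpleGraph V} (hT : G.IsTree) (w : Sym2 V → ℝ)
    (x : V) {a b : V} (p : G.Walk a b) : ℝ :=
  sInf {r | ∃ y ∈ p.support, r = tdist hT w x y}

/-- The set of leaves of a graph. -/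
def leaves (G : SimpleGraph V) [Fintype V] [DecidableRel G.Adj] : Finset V :=
  Finset.univ.filter (fun v => G.degree v = 1)

/-- The leaf-status of a vertex: the sum of its distances to all leaves. -/
noncomputable def leafStatus {G : SimpleGraph V} [Fintype V] [DecidableRel G.Adj]
    (hT : G.IsTree) (w : Sym2 V → ℝ) (u : V) : ℝ :=
  ∑ x ∈ leaves G, tdist hT w u x

/-- The leaf-status of a path: the sum of the distances of all leaves to the path. -/
noncomputable def pathLeafStatus {G : SimpleGraph V} [Fintype V] [DecidableRel G.Adj]
    (hT : G.IsTree) (w : Sym2 V → ℝ) {a b : V} (p : G.Walk a b) : ℝ :=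
  ∑ x ∈ leaves G, distToPath hT w x p

/-- `Lside hT w u v` is the set `L^{uv}_u` of leaves strictly closer to `u` than to `v`. -/
noncomputable def Lside {G : SimpleGraph V} [Fintype V] [DecidableRel G.Adj]
    (hT : G.IsTree) (w : Sym2 V → ℝ) (u v : V) : Finset V :=
  (leaves G).filter (fun x => tdist hT w x u < tdist hT w x v)

/-
Crossing an edge `uv` from `u` to `v` changes the leaf-status by `w(uv)` times
`|L^{uv}_u| - |L^{uv}_v|`, and these two sets partition the leaves. At a vertex `c` of minimum
leaf-status, the neighbour `x` towards `y` therefore has `|L^{xc}_x| ≤ |L|/2`. Since `x` has a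
third neighbour `z`, some leaf behind `z` lies in `L^{xc}_x` but not in `L^{vx}_v` for the next
vertex `v`, so `|L^{vx}_v| < |L|/2`; moving further away from `x` only shrinks these sets, so the
leaf-status increases strictly at every step from `x` to `y`.
-/

theorem SimpleGraph.exists_adj_ne_ne_of_degree_ne_two {G : SimpleGraph V} {x a b : V}
    [Fintype (G.neighborSet x)] (hx : G.degree x ≠ 2) (ha : G.Adj x a) (hb : G.Adj x b)
    (hab : a ≠ b) : ∃ z, G.Adj x z ∧ z ≠ a ∧ z ≠ b := by
  classical
  by_contra! hz
  apply hx
  have : G.neighborFinset x = {a, b} := by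
    ext z
    simp only [mem_neighborFinset, mem_insert, mem_singleton]
    exact ⟨fun h => or_iff_not_imp_left.2 (hz z h), by rintro (rfl | rfl) <;> assumption⟩
  rw [← card_neighborFinset_eq_degree, this, card_pair hab]

section Tree

variable {G : SimpleGraph V}

lemma walkWeight_append (w : Sym2 V → ℝ) {x y z : V} (p : G.Walk x y) (q : G.Walk y z) :
    walkWeight w (p.append q) = walkWeight w p + walkWeight w q := by
  simp [walkWeight, Walk.edges_append]

lemma walkWeight_reverse (w : Sym2 V → ℝ) {x y : V} (p : G.Walk x y) :
    walkWeight w p.reverse = walkWeight w p := by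
  simp [walkWeight, Walk.edges_reverse, List.sum_reverse]

variable (hT : G.IsTree) (w : Sym2 V → ℝ)

lemma tpath_isPath (x y : V) : (tpath hT x y).IsPath :=
  (hT.existsUnique_path x y).choose_spec.1

lemma SimpleGraph.Walk.IsPath.eq_tpath {x y : V} {p : G.Walk x y} (hp : p.IsPath) :
    p = tpath hT x y :=
  (hT.existsUnique_path x y).choose_spec.2 p hp

lemma tdist_comm (x y : V) : tdist hT w x y = tdist hT w y x := by
  rw [tdist, tdist, ← ((tpath_isPath hT x y).reverse).eq_tpath hT, walkWeight_reverse]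

lemma tdist_of_adj {u v : V} (h : G.Adj u v) : tdist hT w u v = w s(u, v) := by
  rw [tdist, ← (Walk.IsPath.of_adj h).eq_tpath hT]
  simp [walkWeight]

lemma tdist_eq_add_of_mem_support {a b z : V} (hz : z ∈ (tpath hT a b).support) :
    tdist hT w a b = tdist hT w a z + tdist hT w z b := by
  classical
  have hp := tpath_isPath hT a b
  rw [tdist, ← (tpath hT a b).take_spec hz, walkWeight_append, (hp.takeUntil hz).eq_tpath hT,
    (hp.dropUntil hz).eq_tpath hT, tdist, tdist]

lemma tdist_eq_add_of_adj_of_mem_support {t u v : V} (h : G.Adj u v)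
    (hu : u ∈ (tpath hT t v).support) : tdist hT w t v = tdist hT w t u + w s(u, v) := by
  rw [tdist_eq_add_of_mem_support hT w hu, tdist_of_adj hT w h]

lemma mem_support_tpath_or {u v : V} (h : G.Adj u v) (t : V) :
    u ∈ (tpath hT t v).support ∨ v ∈ (tpath hT t u).support :=
  or_iff_not_imp_right.2 <| hT.isAcyclic.mem_support_of_ne_mem_support_of_adj_of_isPath
    (tpath_isPath hT t v) (tpath_isPath hT t u) h.symm

-- otherwise `s` and `z` would both be the penultimate vertex of the path from `t` to `x`
lemma mem_support_tpath_of_adj {t x s z : V} (hs : G.Adj s x) (hz : G.Adj z x)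
    (hzt : z ∈ (tpath hT t x).support) (hsz : s ≠ z) : x ∈ (tpath hT t s).support := by
  refine (mem_support_tpath_or hT hs t).resolve_left fun hst => hsz ?_
  have hp := tpath_isPath hT t x
  rw [hT.isAcyclic.eq_penultimate_of_adj_end hp hs.symm hst,
    hT.isAcyclic.eq_penultimate_of_adj_end hp hz.symm hzt]

lemma exists_leaf_mem_support_tpath [Fintype V] [DecidableRel G.Adj] {u v : V} (h : G.Adj u v) :
    ∃ t ∈ leaves G, u ∈ (tpath hT t v).support := by
  classical
  obtain ⟨t, ht, hmax⟩ := exists_max_image {t | u ∈ (tpath hT t v).support}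
    (fun t => (tpath hT t v).length) ⟨u, by simp⟩
  simp only [mem_filter, mem_univ, true_and] at ht hmax
  refine ⟨t, ?_, ht⟩
  have htv : t ≠ v := by
    rintro rfl
    rw [← Walk.IsPath.nil.eq_tpath hT, Walk.support_nil, List.mem_singleton] at ht
    exact h.ne ht
  have hp := tpath_isPath hT t v
  -- a neighbour of `t` off the path would give a longer path to `v` through `u`
  have hnbr : ∀ s, G.Adj t s → s ∈ (tpath hT t v).support := by
    intro s hs
    by_contra hsn
    have hlong := (Walk.IsPath.cons (h := hs.symm) hp hsn).eq_tpath hT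
    have := hmax s (by rw [← hlong]; exact List.mem_cons_of_mem _ ht)
    rw [← hlong, Walk.length_cons] at this
    omega
  simp only [leaves, mem_filter, mem_univ, true_and, degree_eq_one_iff_existsUnique_adj]
  exact ⟨_, (tpath hT t v).adj_snd (Walk.not_nil_of_ne htv),
    fun s hs => hT.isAcyclic.eq_snd_of_adj_start hp hs (hnbr s hs)⟩

variable (hw : ∀ e ∈ G.edgeSet, 0 < w e)
include hw

lemma tdist_lt_tdist_iff {t u v : V} (h : G.Adj u v) :
    tdist hT w t u < tdist hT w t v ↔ u ∈ (tpath hT t v).support := by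
  have hpos : 0 < w s(u, v) := hw _ h
  refine ⟨fun hlt => (mem_support_tpath_or hT h t).resolve_right fun hv => ?_, fun hu => ?_⟩
  · have := tdist_eq_add_of_adj_of_mem_support hT w h.symm hv
    rw [Sym2.eq_swap] at this
    linarith
  · rw [tdist_eq_add_of_adj_of_mem_support hT w h hu]
    linarith

variable [Fintype V] [DecidableRel G.Adj]

lemma mem_Lside_iff {t u v : V} (h : G.Adj u v) :
    t ∈ Lside hT w u v ↔ t ∈ leaves G ∧ u ∈ (tpath hT t v).support := by
  rw [Lside, mem_filter, tdist_lt_tdist_iff hT w hw h]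

lemma Lside_swap {u v : V} (h : G.Adj u v) :
    Lside hT w v u = (leaves G).filter fun t => ¬ tdist hT w t u < tdist hT w t v := by
  refine filter_congr fun t _ => ?_
  rw [tdist_lt_tdist_iff hT w hw h.symm, tdist_lt_tdist_iff hT w hw h]
  exact ⟨hT.isAcyclic.ne_mem_support_of_support_of_adj_of_isPath (tpath_isPath hT t u)
    (tpath_isPath hT t v) h, (mem_support_tpath_or hT h t).resolve_left⟩

lemma card_Lside_add_card_Lside {u v : V} (h : G.Adj u v) :
    #(Lside hT w u v) + #(Lside hT w v u) = #(leaves G) := by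
  rw [Lside, Lside_swap hT w hw h, card_filter_add_card_filter_not]

lemma leafStatus_sub_leafStatus {u v : V} (h : G.Adj u v) :
    leafStatus hT w v - leafStatus hT w u
      = w s(u, v) * ((#(Lside hT w u v) : ℝ) - #(Lside hT w v u)) := by
  have hstep : ∀ t, tdist hT w v t - tdist hT w u t =
      if tdist hT w t u < tdist hT w t v then w s(u, v) else -w s(u, v) := by
    intro t
    rw [tdist_comm hT w v, tdist_comm hT w u]
    rcases mem_support_tpath_or hT h t with hu | hv
    · rw [if_pos ((tdist_lt_tdist_iff hT w hw h).2 hu),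
        tdist_eq_add_of_adj_of_mem_support hT w h hu]
      ring
    · have hvu := tdist_eq_add_of_adj_of_mem_support hT w h.symm hv
      rw [Sym2.eq_swap] at hvu
      rw [if_neg (by linarith [hw s(u, v) h]), hvu]
      ring
  rw [leafStatus, leafStatus, ← sum_sub_distrib, sum_congr rfl fun t _ => hstep t, sum_ite,
    sum_const, sum_const, ← Lside, ← Lside_swap hT w hw h]
  simp only [nsmul_eq_mul]
  ring

lemma leafStatus_lt_leafStatus_iff {u v : V} (h : G.Adj u v) :
    leafStatus hT w u < leafStatus hT w v ↔ #(Lside hT w v u) < #(Lside hT w u v) := by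
  rw [← sub_pos, leafStatus_sub_leafStatus hT w hw h, mul_pos_iff_of_pos_left (hw s(u, v) h), sub_pos,
    Nat.cast_lt]

lemma two_mul_card_Lside_le {u v : V} (h : G.Adj u v)
    (hle : leafStatus hT w u ≤ leafStatus hT w v) : 2 * #(Lside hT w v u) ≤ #(leaves G) := by
  have := (leafStatus_lt_leafStatus_iff hT w hw h.symm).not.1 hle.not_gt
  have := card_Lside_add_card_Lside hT w hw h
  omega

lemma Lside_subset_Lside {u v z : V} (huv : G.Adj u v) (hvz : G.Adj v z) (huz : u ≠ z) :
    Lside hT w z v ⊆ Lside hT w v u := by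
  intro t ht
  rw [mem_Lside_iff hT w hw hvz.symm] at ht
  rw [mem_Lside_iff hT w hw huv.symm]
  exact ⟨ht.1, mem_support_tpath_of_adj hT huv hvz.symm ht.2 huz⟩

lemma leafStatus_lt_of_two_mul_card_Lside_lt {u v : V} (h : G.Adj u v)
    (hcard : 2 * #(Lside hT w v u) < #(leaves G)) : leafStatus hT w u < leafStatus hT w v := by
  have := card_Lside_add_card_Lside hT w hw h
  rw [leafStatus_lt_leafStatus_iff hT w hw h]
  omega

lemma leafStatus_lt_of_isPath {u v y : V} (h : G.Adj u v) (q : G.Walk v y)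
    (hq : (Walk.cons h q).IsPath) (hcard : 2 * #(Lside hT w v u) < #(leaves G)) :
    leafStatus hT w u < leafStatus hT w y := by
  induction q generalizing u with
  | nil => exact leafStatus_lt_of_two_mul_card_Lside_lt hT w hw h hcard
  | @cons v z y h' r ih =>
    rw [Walk.cons_isPath_iff] at hq
    have huz : u ≠ z := by
      rintro rfl
      exact hq.2 (by simp)
    have hsub := card_le_card (Lside_subset_Lside hT w hw h h' huz)
    exact (leafStatus_lt_of_two_mul_card_Lside_lt hT w hw h hcard).trans
      (ih h' hq.1 (by omega))

lemma two_mul_card_Lside_lt_of_degree_ne_two {c x v : V} (hdeg : G.degree x ≠ 2)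
    (hc : leafStatus hT w c ≤ leafStatus hT w x) (hcx : G.Adj c x) (hxv : G.Adj x v)
    (hcv : c ≠ v) : 2 * #(Lside hT w v x) < #(leaves G) := by
  obtain ⟨z, hxz, hzc, hzv⟩ := exists_adj_ne_ne_of_degree_ne_two hdeg hcx.symm hxv hcv
  obtain ⟨t, ht, hzt⟩ := exists_leaf_mem_support_tpath hT hxz.symm
  have htxc : t ∈ Lside hT w x c := (mem_Lside_iff hT w hw hcx.symm).2
    ⟨ht, mem_support_tpath_of_adj hT hcx hxz.symm hzt hzc.symm⟩
  have htxv : t ∈ Lside hT w x v := (mem_Lside_iff hT w hw hxv).2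
    ⟨ht, mem_support_tpath_of_adj hT hxv.symm hxz.symm hzt hzv.symm⟩
  have hlt : #(Lside hT w v x) < #(Lside hT w x c) :=
    card_lt_card <| (ssubset_iff_of_subset (Lside_subset_Lside hT w hw hcx hxv hcv)).2
      ⟨t, htxc, fun htvx => lt_asymm (mem_filter.1 htxv).2 (mem_filter.1 htvx).2⟩
  have := two_mul_card_Lside_le hT w hw hcx hc
  omega

end Tree

/-- if `c` has minimum leaf-status, then for any vertex `y`
distinct from and not adjacent to `c`, with `x` the neighbor of `c` on the
`c`-`y`-path, we have `ℓ(y) > ℓ(x)`. -/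
theorem stmt14 {V : Type*} [Fintype V] {G : SimpleGraph V} [DecidableRel G.Adj]
    (hT : G.IsTree) (w : Sym2 V → ℝ) (hw : ∀ e ∈ G.edgeSet, 0 < w e)
    (hdeg : ∀ x : V, G.degree x ≠ 2)
    (c : V) (hc : ∀ y : V, leafStatus hT w c ≤ leafStatus hT w y)
    (y : V) (hyc : y ≠ c) (hadj : ¬ G.Adj c y)
    (p : G.Walk c y) (hp : p.IsPath) (x : V) (hx : x = p.getVert 1) :
    leafStatus hT w x < leafStatus hT w y := by
  subst hx
  cases p with
  | nil => exact absurd rfl hyc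
  | cons hcx q =>
    cases q with
    | nil => exact absurd hcx hadj
    | @cons _ v _ hxv q =>
      rw [Walk.cons_isPath_iff] at hp
      have hcv : c ≠ v := by
        rintro rfl
        exact hp.2 (by simp)
      exact leafStatus_lt_of_isPath hT w hw hxv q hp.1
        (two_mul_card_Lside_lt_of_degree_ne_two hT w hw (hdeg _) (hc _) hcx hxv hcv)
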